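/- Let 𝒜 : ℝ^{m×n} → ℝ^p be a linear map with restricted isometry constant R_{2r}, let X ∈ ℝ^{m×n} have rank r, let y = 𝒜(X), and let X_0 = H_r(𝒜*(y)) be a best rank-r approximation of 𝒜*(y) in the Frobenius norm. Then ‖X_0 − X‖_F ≤ 2 R_{2r} ‖X‖_F. -/
import Mathlib


open Matrix BigOperators

/-- Frobenius inner product of two real matrices. -/
noncomputable def frobInner {m n : ℕ} (A B : Matrix (Fin m) (Fin n) ℝ) : ℝ :=
  ∑ i, ∑ j, A i j * B i j

/-- Frobenius norm of a real matrix. -/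
noncomputable def frobNorm {m n : ℕ} (A : Matrix (Fin m) (Fin n) ℝ) : ℝ :=
  Real.sqrt (∑ i, ∑ j, (A i j) ^ 2)

/-- Euclidean inner product on `ℝ^p`. -/
noncomputable def euclInner {p : ℕ} (x y : Fin p → ℝ) : ℝ := ∑ i, x i * y i

/-- Euclidean norm on `ℝ^p`. -/
noncomputable def euclNorm {p : ℕ} (x : Fin p → ℝ) : ℝ := Real.sqrt (∑ i, (x i) ^ 2)

/-- `R` is the restricted isometry constant of order `s` of the linear map `A`:
the smallest number `t` such that `(1-t)‖Z‖_F² ≤ ‖A Z‖₂² ≤ (1+t)‖Z‖_F²`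
for all matrices `Z` of rank at most `s`. -/
def IsRIC {m n p : ℕ} (A : Matrix (Fin m) (Fin n) ℝ →ₗ[ℝ] (Fin p → ℝ)) (s : ℕ) (R : ℝ) :
    Prop :=
  IsLeast {t : ℝ | ∀ Z : Matrix (Fin m) (Fin n) ℝ, Z.rank ≤ s →
    (1 - t) * (frobNorm Z) ^ 2 ≤ (euclNorm (A Z)) ^ 2 ∧
      (euclNorm (A Z)) ^ 2 ≤ (1 + t) * (frobNorm Z) ^ 2} R

/-- Orthogonal projection onto the tangent space of the rank-`r` manifold at
`U * Σ * Vᵀ`: `P(Z) = U Uᵀ Z + Z V Vᵀ − U Uᵀ Z V Vᵀ`. -/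
noncomputable def tangentProj {m n r : ℕ} (U : Matrix (Fin m) (Fin r) ℝ)
    (V : Matrix (Fin n) (Fin r) ℝ) (Z : Matrix (Fin m) (Fin n) ℝ) :
    Matrix (Fin m) (Fin n) ℝ :=
  U * Uᵀ * Z + Z * (V * Vᵀ) - U * Uᵀ * Z * (V * Vᵀ)

/-- Spectral (operator) norm of a real matrix. -/
noncomputable def specNorm {m n : ℕ} (A : Matrix (Fin m) (Fin n) ℝ) : ℝ :=
  sSup {c : ℝ | ∃ x : Fin n → ℝ, euclNorm x ≤ 1 ∧ c = euclNorm (A.mulVec x)}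

/- ### Auxiliary lemmas -/

lemma myrank_add_le {m n : ℕ} (A B : Matrix (Fin m) (Fin n) ℝ) :
    (A + B).rank ≤ A.rank + B.rank := by
  unfold Matrix.rank
  rw [Matrix.mulVecLin_add]
  have h : LinearMap.range (A.mulVecLin + B.mulVecLin) ≤
      LinearMap.range A.mulVecLin ⊔ LinearMap.range B.mulVecLin := by
    rintro x ⟨v, rfl⟩
    exact Submodule.mem_sup.2 ⟨A.mulVecLin v, ⟨v, rfl⟩, B.mulVecLin v, ⟨v, rfl⟩, rfl⟩
  exact (Submodule.finrank_mono h).trans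
    (Submodule.finrank_add_le_finrank_add_finrank _ _)

lemma myrank_smul_le {m n : ℕ} (c : ℝ) (A : Matrix (Fin m) (Fin n) ℝ) :
    (c • A).rank ≤ A.rank := by
  unfold Matrix.rank
  apply Submodule.finrank_mono
  rintro x ⟨v, rfl⟩
  exact ⟨c • v, by simp [Matrix.mulVecLin, Matrix.smul_mulVec, Matrix.mulVec_smul]⟩

lemma myrank_zero {m n : ℕ} (A : Matrix (Fin m) (Fin n) ℝ) (h : A.rank = 0) : A = 0 := by
  unfold Matrix.rank at h
  rw [Submodule.finrank_eq_zero] at h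
  ext i j
  have h1 : A.mulVecLin = 0 := LinearMap.range_eq_bot.mp h
  have h2 := congrFun (congrFun (congrArg DFunLike.coe h1) (Pi.single j 1)) i
  simpa [Matrix.mulVecLin, Matrix.mulVec_single] using h2

lemma frobNorm_nonneg {m n : ℕ} (Z : Matrix (Fin m) (Fin n) ℝ) : 0 ≤ frobNorm Z :=
  Real.sqrt_nonneg _

lemma frobNorm_sq {m n : ℕ} (Z : Matrix (Fin m) (Fin n) ℝ) :
    frobNorm Z ^ 2 = frobInner Z Z := by
  have h : frobInner Z Z = ∑ i, ∑ j, (Z i j) ^ 2 := by simp [frobInner, sq]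
  rw [h, frobNorm, Real.sq_sqrt]
  positivity

lemma euclNorm_sq {p : ℕ} (x : Fin p → ℝ) : euclNorm x ^ 2 = euclInner x x := by
  have h : euclInner x x = ∑ i, (x i) ^ 2 := by simp [euclInner, sq]
  rw [h, euclNorm, Real.sq_sqrt]
  positivity

lemma frobNorm_pos {m n : ℕ} (Z : Matrix (Fin m) (Fin n) ℝ) (h : Z ≠ 0) :
    0 < frobNorm Z := by
  rw [frobNorm]
  apply Real.sqrt_pos.2
  have h' : ¬ ∀ i j, Z i j = 0 := fun hh => h (by ext i j; simpa using hh i j)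
  push_neg at h'
  obtain ⟨i, j, hij⟩ := h'
  have h1 : 0 < (Z i j) ^ 2 := by positivity
  have h2 : (Z i j) ^ 2 ≤ ∑ j', (Z i j') ^ 2 :=
    Finset.single_le_sum (f := fun j' => Z i j' ^ 2) (fun _ _ => sq_nonneg _)
      (Finset.mem_univ j)
  have h3 : ∑ j', (Z i j') ^ 2 ≤ ∑ i', ∑ j', (Z i' j') ^ 2 :=
    Finset.single_le_sum (f := fun i' => ∑ j', (Z i' j') ^ 2)
      (fun i' _ => Finset.sum_nonneg fun _ _ => sq_nonneg _) (Finset.mem_univ i)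
  linarith

lemma frobInner_expand {m n : ℕ} (c : ℝ) (P Q : Matrix (Fin m) (Fin n) ℝ) :
    frobInner (P + c • Q) (P + c • Q) =
      frobInner P P + 2 * c * frobInner P Q + c ^ 2 * frobInner Q Q := by
  have h : ∀ i j, (P + c • Q) i j * (P + c • Q) i j =
      P i j * P i j + 2 * c * (P i j * Q i j) + c ^ 2 * (Q i j * Q i j) := by
    intro i j
    simp only [Matrix.add_apply, Matrix.smul_apply, smul_eq_mul]
    ring
  simp only [frobInner, h, Finset.sum_add_distrib, ← Finset.mul_sum]

lemma euclInner_expand {p : ℕ} (c : ℝ) (x y : Fin p → ℝ) :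
    euclInner (x + c • y) (x + c • y) =
      euclInner x x + 2 * c * euclInner x y + c ^ 2 * euclInner y y := by
  have h : ∀ i, (x + c • y) i * (x + c • y) i =
      x i * x i + 2 * c * (x i * y i) + c ^ 2 * (y i * y i) := by
    intro i
    simp only [Pi.add_apply, Pi.smul_apply, smul_eq_mul]
    ring
  simp only [euclInner, h, Finset.sum_add_distrib, ← Finset.mul_sum]

lemma frobInner_sub_right {m n : ℕ} (P Q R : Matrix (Fin m) (Fin n) ℝ) :
    frobInner P (Q - R) = frobInner P Q - frobInner P R := by
  simp [frobInner, Matrix.sub_apply, mul_sub, Finset.sum_sub_distrib]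

/-- Initialization bound: for `X₀ = H_r(𝒜*(y))` with `y = 𝒜(X)` and
`rank X = r`, `‖X₀ − X‖_F ≤ 2R₂ᵣ‖X‖_F`. -/
theorem initialization_bound {m n p r : ℕ}
    (A : Matrix (Fin m) (Fin n) ℝ →ₗ[ℝ] (Fin p → ℝ))
    (Astar : (Fin p → ℝ) →ₗ[ℝ] Matrix (Fin m) (Fin n) ℝ)
    (hAstar : ∀ (v : Fin p → ℝ) (Z : Matrix (Fin m) (Fin n) ℝ),
      euclInner (A Z) v = frobInner Z (Astar v))
    (R2 : ℝ) (hR2 : IsRIC A (2 * r) R2)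
    (X : Matrix (Fin m) (Fin n) ℝ) (hrankX : X.rank = r)
    (y : Fin p → ℝ) (hy : y = A X)
    -- `X₀` is a best rank-`r` approximation of `𝒜*(y)` in the Frobenius norm
    (X0 : Matrix (Fin m) (Fin n) ℝ) (hX0rank : X0.rank ≤ r)
    (hX0best : ∀ Y : Matrix (Fin m) (Fin n) ℝ, Y.rank ≤ r →
      frobNorm (X0 - Astar y) ≤ frobNorm (Y - Astar y)) :
    frobNorm (X0 - X) ≤ 2 * R2 * frobNorm X := by
  by_cases hr : r = 0
  · subst hr
    have hX : X = 0 := myrank_zero X hrankX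
    have hX0 : X0 = 0 := myrank_zero X0 (Nat.le_zero.mp hX0rank)
    rw [hX, hX0, sub_zero]
    simp [frobNorm]
  · -- abbreviations
    set W := X0 - X with hW
    set a := frobNorm W with ha
    set b := frobNorm X with hb
    have hXne : X ≠ 0 := fun h => hr (by rw [← hrankX, h, Matrix.rank_zero])
    have hbpos : 0 < b := frobNorm_pos X hXne
    have hanneg : 0 ≤ a := frobNorm_nonneg W
    have hrip := hR2.1
    have hXrank2 : X.rank ≤ 2 * r := by rw [hrankX]; omega
    -- R2 ≥ 0
    have hR2nn : 0 ≤ R2 := by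
      obtain ⟨h1, h2⟩ := hrip X hXrank2
      have hb2 : 0 < (frobNorm X) ^ 2 := by positivity
      nlinarith
    -- key inequality from best approximation
    set M := Astar y with hM
    have hbest := hX0best X (le_of_eq hrankX)
    have hbest2 : frobNorm (X0 - M) ^ 2 ≤ frobNorm (X - M) ^ 2 :=
      pow_le_pow_left₀ (frobNorm_nonneg _) hbest 2
    rw [frobNorm_sq, frobNorm_sq] at hbest2
    have hsplit : X0 - M = W + (1 : ℝ) • (X - M) := by
      rw [hW, one_smul, sub_add_sub_cancel]
    rw [hsplit, frobInner_expand] at hbest2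
    have hWXM : frobInner W (X - M) = frobInner W X - frobInner W M :=
      frobInner_sub_right _ _ _
    have hWM : frobInner W M = euclInner (A W) (A X) := by
      rw [hM, ← hAstar, hy]
    set c := euclInner (A W) (A X) with hc
    set d := frobInner W X with hd
    have key1 : frobInner W W ≤ 2 * (c - d) := by
      rw [hWXM, hWM] at hbest2
      nlinarith [hbest2]
    -- rank bound
    have hrank1 : ∀ t : ℝ, (W + t • X).rank ≤ 2 * r := by
      intro t
      have he : W + t • X = X0 + (t - 1) • X := by
        rw [hW]
        ext i j
        simp only [Matrix.add_apply, Matrix.sub_apply, Matrix.smul_apply, smul_eq_mul]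
        ring
      rw [he]
      calc (X0 + (t - 1) • X).rank ≤ X0.rank + ((t - 1) • X).rank := myrank_add_le _ _
        _ ≤ r + r := add_le_add hX0rank ((myrank_smul_le _ _).trans (le_of_eq hrankX))
        _ = 2 * r := by omega
    -- apply RIP with s = a / b
    set s := a / b with hs
    have hsb : s * b = a := div_mul_cancel₀ a hbpos.ne'
    have hsnn : 0 ≤ s := div_nonneg hanneg hbpos.le
    have hp := hrip (W + s • X) (hrank1 s)
    have hmm := hrip (W + (-s) • X) (hrank1 (-s))
    have hAp : A (W + s • X) = A W + s • (A X) := by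
      rw [map_add, A.map_smul]
    have hAm : A (W + (-s) • X) = A W + (-s) • (A X) := by
      rw [map_add, A.map_smul]
    rw [frobNorm_sq, euclNorm_sq, hAp, frobInner_expand, euclInner_expand] at hp
    rw [frobNorm_sq, euclNorm_sq, hAm, frobInner_expand, euclInner_expand] at hmm
    set eWW := euclInner (A W) (A W) with heWW
    set eXX := euclInner (A X) (A X) with heXX
    have hfWW : frobInner W W = a ^ 2 := (frobNorm_sq W).symm
    have hfXX : frobInner X X = b ^ 2 := (frobNorm_sq X).symm
    rw [hfWW, hfXX] at hp hmm
    obtain ⟨-, F1⟩ := hp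
    obtain ⟨F2, -⟩ := hmm
    rw [← hc, ← hd] at F1 F2
    rw [hfWW] at key1
    have hs2 : s ^ 2 * b ^ 2 = a ^ 2 := by
      rw [← mul_pow, hsb]
    have hR2s2 : R2 * (s ^ 2 * b ^ 2) = R2 * a ^ 2 := by rw [hs2]
    clear_value s eWW eXX c d a b W M
    -- combine: s * (c - d) ≤ R2 * a ^ 2
    have G : s * (c - d) ≤ R2 * a ^ 2 := by
      ring_nf at F1 F2 hR2s2 hs2 ⊢
      linarith only [F1, F2, hR2s2, hs2]
    -- conclude
    rcases eq_or_lt_of_le hanneg with haz | hapos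
    · rw [← haz]; positivity
    · have hacd : a * (c - d) ≤ R2 * a ^ 2 * b := by
        have h := mul_le_mul_of_nonneg_right G hbpos.le
        have he : a * (c - d) = s * (c - d) * b := by rw [← hsb]; ring
        linarith only [h, he.le, he.ge]
      have h1 : a * a ^ 2 ≤ a * (2 * (c - d)) :=
        mul_le_mul_of_nonneg_left key1 hapos.le
      by_contra hcon
      push_neg at hcon
      have h2 : 2 * R2 * b * a ^ 2 < a * a ^ 2 :=
        mul_lt_mul_of_pos_right hcon (by positivity)
      have e1 : a * (2 * (c - d)) = 2 * (a * (c - d)) := by ring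
      have e2 : 2 * (R2 * a ^ 2 * b) = 2 * R2 * b * a ^ 2 := by ring
      linarith only [h1, h2, hacd, e1.le, e1.ge, e2.le, e2.ge]
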